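/- Let A ⊆ ℝⁿ be an H-polyhedron with nonempty interior and suppose A = ⋂_{i=1}^t Cᵢ is an irredundant decomposition of A into closed half-spaces. Then, up to reordering, the half-spaces C₁, …, C_t are uniquely determined by A: if A = ⋂_{i=1}^t C'ᵢ is another irredundant decomposition into closed half-spaces, then (C'₁, …, C'_t) is a permutation of (C₁, …, C_t). -/

import Mathlib

open RealInnerProductSpace

/-- A closed half-space in `ℝⁿ`: `{x | ⟪a, x⟫ ≤ b}` with `a ≠ 0`. -/
def IsClosedHalfSpace {n : ℕ} (C : Set (EuclideanSpace ℝ (Fin n))) : Prop :=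
  ∃ (a : EuclideanSpace ℝ (Fin n)) (b : ℝ), a ≠ 0 ∧
    C = {x : EuclideanSpace ℝ (Fin n) | ⟪a, x⟫ ≤ b}

/-!
Irredundance means that each `C' k` is violated by a point `x` satisfying all the other
constraints. On the segment from an interior point of `A` to `x` there is a point `p` of the
boundary hyperplane of `C' k` near which `A` coincides with `C' k`. As `p` is a boundary point of
`A`, it lies on the boundary hyperplane of some `C i`, and a half-space containing a half-ball of
`C' k` centred at a common boundary point is `C' k` itself. So `k ↦ i` is well defined, and
injective again by irredundance.
-/

open Set Filter Topology

section InnerProductSpace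

variable {E : Type*} [NormedAddCommGroup E] [InnerProductSpace ℝ E]

lemma interior_setOf_inner_le {a : E} (ha : a ≠ 0) (b : ℝ) :
    interior {x : E | ⟪a, x⟫ ≤ b} = {x | ⟪a, x⟫ < b} := by
  have hf : innerSL ℝ a ≠ 0 := fun h => ha (by simpa using congrArg (· a) h)
  change interior (innerSL ℝ a ⁻¹' Iic b) = innerSL ℝ a ⁻¹' Iio b
  rw [← (ContinuousLinearMap.isOpenMap_of_ne_zero _ hf).preimage_interior_eq_interior_preimage
    (by fun_prop), interior_Iic]

/-- The one-constraint case of Farkas' lemma. -/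
lemma exists_nonneg_smul_eq_of_inner_nonpos_imp {a a' : E}
    (h : ∀ v, ⟪a', v⟫ ≤ 0 → ⟪a, v⟫ ≤ 0) : ∃ c : ℝ, 0 ≤ c ∧ a = c • a' := by
  set c := ⟪a', a⟫ / ‖a'‖ ^ 2
  have hperp : ⟪a', a - c • a'⟫ = 0 := by
    rcases eq_or_ne a' 0 with rfl | ha'
    · simp
    · rw [inner_sub_right, inner_smul_right, real_inner_self_eq_norm_sq,
        div_mul_cancel₀ _ (pow_ne_zero 2 (norm_ne_zero_iff.2 ha')), sub_self]
  have hinner : ⟪a, a - c • a'⟫ = 0 := by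
    have hneg := h (-(a - c • a')) (by rw [inner_neg_right, hperp, neg_zero])
    rw [inner_neg_right] at hneg
    linarith [h _ hperp.le]
  refine ⟨c, div_nonneg ?_ (sq_nonneg _), ?_⟩
  · have := h (-a') (by rw [inner_neg_right, neg_nonpos]; exact real_inner_self_nonneg)
    rw [inner_neg_right, real_inner_comm] at this
    linarith
  · rw [← sub_eq_zero, ← inner_self_eq_zero (𝕜 := ℝ), inner_sub_left, real_inner_smul_left,
      hinner, hperp, mul_zero, sub_zero]

lemma inner_nonpos_imp_of_forall_mem_ball {a a' p : E} {ε : ℝ} (hε : 0 < ε)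
    (h : ∀ x ∈ Metric.ball p ε, ⟪a', x - p⟫ ≤ 0 → ⟪a, x - p⟫ ≤ 0) {v : E} (hv : ⟪a', v⟫ ≤ 0) :
    ⟪a, v⟫ ≤ 0 := by
  have hnear : ∀ᶠ s in 𝓝[>] (0 : ℝ), p + s • v ∈ Metric.ball p ε := by
    refine (((Continuous.tendsto (by fun_prop) 0).mono_left nhdsWithin_le_nhds).eventually
      (Metric.isOpen_ball.mem_nhds ?_))
    simpa using hε
  obtain ⟨s, hs, hs0⟩ := (hnear.and self_mem_nhdsWithin).exists
  have hsv := h _ hs (by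
    simpa [inner_smul_right] using mul_nonpos_of_nonneg_of_nonpos hs0.le hv)
  simp only [add_sub_cancel_left, inner_smul_right] at hsv
  exact nonpos_of_mul_nonpos_right hsv hs0

lemma setOf_inner_le_eq_of_ball_inter_subset {a a' p : E} {b b' ε : ℝ} (ha : a ≠ 0)
    (hε : 0 < ε) (hpa : ⟪a, p⟫ = b) (hpa' : ⟪a', p⟫ = b')
    (h : Metric.ball p ε ∩ {x | ⟪a', x⟫ ≤ b'} ⊆ {x | ⟪a, x⟫ ≤ b}) :
    {x | ⟪a, x⟫ ≤ b} = {x | ⟪a', x⟫ ≤ b'} := by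
  subst hpa hpa'
  have hcone : ∀ x ∈ Metric.ball p ε, ⟪a', x - p⟫ ≤ 0 → ⟪a, x - p⟫ ≤ 0 := fun x hx hx' => by
    rw [inner_sub_right, sub_nonpos] at hx' ⊢
    exact h ⟨hx, hx'⟩
  obtain ⟨c, hc, rfl⟩ := exists_nonneg_smul_eq_of_inner_nonpos_imp fun v =>
    inner_nonpos_imp_of_forall_mem_ball hε hcone
  have hc : 0 < c := hc.lt_of_ne (by rintro rfl; exact ha (zero_smul ℝ a'))
  ext x
  simp only [mem_ofPred_eq, real_inner_smul_left]
  exact mul_le_mul_iff_right₀ hc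

lemma exists_setOf_inner_le_eq_of_ball_inter_subset {ι : Type*} [Finite ι] {a : ι → E}
    {b : ι → ℝ} (ha : ∀ i, a i ≠ 0) {a' p : E} {b' ε : ℝ} (ha' : a' ≠ 0) (hε : 0 < ε)
    (hp : ⟪a', p⟫ = b') (hsub : ⋂ i, {x | ⟪a i, x⟫ ≤ b i} ⊆ {x | ⟪a', x⟫ ≤ b'})
    (hball : Metric.ball p ε ∩ {x | ⟪a', x⟫ ≤ b'} ⊆ ⋂ i, {x | ⟪a i, x⟫ ≤ b i}) :
    ∃ i, {x | ⟪a i, x⟫ ≤ b i} = {x | ⟪a', x⟫ ≤ b'} := by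
  have hpA : p ∈ ⋂ i, {x | ⟪a i, x⟫ ≤ b i} := hball ⟨Metric.mem_ball_self hε, hp.le⟩
  have hpint : p ∉ interior (⋂ i, {x | ⟪a i, x⟫ ≤ b i}) := fun hpint => by
    have := interior_mono hsub hpint
    rw [interior_setOf_inner_le ha'] at this
    exact this.ne hp
  obtain ⟨i, hi⟩ : ∃ i, ⟪a i, p⟫ = b i := by
    by_contra! hne
    refine hpint ?_
    simp only [interior_iInter_of_finite, interior_setOf_inner_le (ha _), mem_iInter]
    exact fun i => (mem_iInter.1 hpA i).lt_of_ne (hne i)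
  exact ⟨i, setOf_inner_le_eq_of_ball_inter_subset (ha i) hε hi hp
    (hball.trans (iInter_subset _ i))⟩

/-- `p` is where the segment from `z` to `x` crosses the boundary of `C k`; the other constraints
hold strictly there, as they do on the whole half-open segment. -/
lemma exists_ball_inter_subset_iInter {ι : Type*} {C : ι → Set E} (hC : ∀ j, Convex ℝ (C j))
    {k : ι} {a' : E} {b' : ℝ} (ha' : a' ≠ 0) (hk : C k = {x | ⟪a', x⟫ ≤ b'}) {z x : E}
    (hz : z ∈ interior (⋂ j, C j)) (hxk : x ∉ C k) (hx : ∀ j ≠ k, x ∈ C j) :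
    ∃ p, ⟪a', p⟫ = b' ∧ ∃ ε > 0, Metric.ball p ε ∩ C k ⊆ ⋂ j, C j := by
  set S := ⋂ j, ⋂ (_ : j ≠ k), C j
  have hzS : z ∈ interior S :=
    interior_mono (fun y hy => mem_iInter₂.2 fun j _ => mem_iInter.1 hy j) hz
  have hz' : ⟪a', z⟫ < b' := by
    have := interior_mono (iInter_subset C k) hz
    rwa [hk, interior_setOf_inner_le ha'] at this
  have hx' : b' < ⟪a', x⟫ := by
    rw [hk] at hxk
    simpa using hxk
  obtain ⟨p, hpseg, hp⟩ : b' ∈ (innerₛₗ ℝ a').toAffineMap '' openSegment ℝ z x := by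
    rw [image_openSegment, openSegment_eq_Ioo (by simpa using hz'.trans hx')]
    simpa using And.intro hz' hx'
  obtain ⟨ε, hε, hballS⟩ := Metric.mem_nhds_iff.1 (mem_interior_iff_mem_nhds.1
    ((convex_iInter₂ fun j _ => hC j).openSegment_interior_self_subset_interior hzS
      (mem_iInter₂.2 hx) hpseg))
  refine ⟨p, by simpa using hp, ε, hε, fun y ⟨hyball, hyk⟩ => mem_iInter.2 fun j => ?_⟩
  rcases eq_or_ne j k with rfl | hj
  · exact hyk
  · exact mem_iInter₂.1 (hballS hyball) j hj

end InnerProductSpace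

lemma exists_notMem_forall_ne_mem_of_irredundant {α : Type*} {P : Set α → Prop} {t : ℕ}
    {A : Set α} {C : Fin t → Set α} (hC : ∀ i, P (C i)) (hA : A = ⋂ i, C i)
    (hirr : ¬ ∃ m : ℕ, m < t ∧ ∃ D : Fin m → Set α, (∀ i, P (D i)) ∧ A = ⋂ i, D i) (k : Fin t) :
    ∃ x, x ∉ C k ∧ ∀ j ≠ k, x ∈ C j := by
  by_contra! hred
  obtain _ | m := t
  · exact k.elim0
  refine hirr ⟨m, m.lt_succ_self, C ∘ k.succAbove, fun j => hC _, ?_⟩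
  ext x
  simp only [hA, mem_iInter, Function.comp_apply, Fin.forall_iff_succAbove k,
    and_iff_right_iff_imp]
  intro hx
  by_contra hxk
  obtain ⟨j, hjk, hxj⟩ := hred x hxk
  obtain ⟨j', rfl⟩ := Fin.exists_succAbove_eq hjk
  exact hxj (hx j')

lemma IsClosedHalfSpace.convex {n : ℕ} {C : Set (EuclideanSpace ℝ (Fin n))}
    (hC : IsClosedHalfSpace C) : Convex ℝ C := by
  obtain ⟨a, b, -, rfl⟩ := hC
  exact convex_halfSpace_le (innerₛₗ ℝ a).isLinear b

theorem irredundant_decomposition_unique (n t : ℕ)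
    (A : Set (EuclideanSpace ℝ (Fin n))) (hint : (interior A).Nonempty)
    (C C' : Fin t → Set (EuclideanSpace ℝ (Fin n)))
    (hC : ∀ i, IsClosedHalfSpace (C i)) (hC' : ∀ i, IsClosedHalfSpace (C' i))
    (hA : A = ⋂ i, C i) (hA' : A = ⋂ i, C' i)
    (hirr : ¬ ∃ m : ℕ, m < t ∧ ∃ D : Fin m → Set (EuclideanSpace ℝ (Fin n)),
      (∀ i, IsClosedHalfSpace (D i)) ∧ A = ⋂ i, D i) :
    ∃ σ : Equiv.Perm (Fin t), ∀ i, C' i = C (σ i) := by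
  choose a b ha hCab using hC
  replace hA : A = ⋂ i, {x | ⟪a i, x⟫ ≤ b i} := hA.trans (iInter_congr hCab)
  obtain ⟨z, hz⟩ := hint
  have hess := exists_notMem_forall_ne_mem_of_irredundant hC' hA' hirr
  have hmatch : ∀ k, ∃ i, C i = C' k := by
    intro k
    obtain ⟨a', b', ha', hk⟩ := hC' k
    obtain ⟨x, hxk, hx⟩ := hess k
    obtain ⟨p, hp, ε, hε, hball⟩ := exists_ball_inter_subset_iInter (fun j => (hC' j).convex)
      ha' hk (hA' ▸ hz) hxk hx
    have hsub : A ⊆ C' k := hA' ▸ iInter_subset C' k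
    rw [← hA', hA, hk] at hball
    rw [hA, hk] at hsub
    simp only [hCab, hk]
    exact exists_setOf_inner_le_eq_of_ball_inter_subset ha ha' hε hp hsub hball
  choose f hf using hmatch
  have hf_inj : Function.Injective f := fun k l hkl => by
    by_contra hne
    obtain ⟨x, hxk, hx⟩ := hess k
    exact hxk (by rw [← hf k, hkl, hf l]; exact hx l (Ne.symm hne))
  exact ⟨Equiv.ofBijective f hf_inj.bijective_of_finite, fun k => (hf k).symm⟩
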